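/- arXiv:1504.08235 — 12 statements merged into one kernel-verified Lean document; each statement's English description precedes it below -/
import Mathlib

section
/- Let d ≥ 1 and l ≥ 1 be integers and let ℱ be a finite family of finite sets, each of cardinality exactly d. If |ℱ| > (l−1)^d, then ℱ contains an l-flower: there exists a set C such that the subfamily 𝒢 = {F ∈ ℱ : C ⊊ F} is an l-flower with core C, i.e., every blocking set for the restriction {F \ C : F ∈ ℱ, C ⊊ F} has at least l elements. -/
/-- A family `𝒢` is an `l`-flower with core `C` if every member strictly contains `C`
and every blocking set for the restriction `{G \ C : G ∈ 𝒢}` has at least `l` elements. -/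
def IsFlower {α : Type*} [DecidableEq α] (l : ℕ) (C : Finset α)
    (𝒢 : Finset (Finset α)) : Prop :=
  (∀ G ∈ 𝒢, C ⊂ G) ∧
  ∀ X : Finset α, (∀ G ∈ 𝒢, ((G \ C) ∩ X).Nonempty) → l ≤ X.card

lemma flower_aux {α : Type*} [DecidableEq α] (d : ℕ) : ∀ (l : ℕ), 1 ≤ l →
    ∀ (ℱ : Finset (Finset α)), (∀ F ∈ ℱ, F.card = d) → (l - 1) ^ d < ℱ.card →
    ∃ C : Finset α, IsFlower l C (ℱ.filter fun F => C ⊂ F) := by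
  induction d with
  | zero =>
    intro l hl ℱ hcard hsize
    exfalso
    have hsub : ℱ ⊆ {∅} := fun F hF => by
      simp [Finset.card_eq_zero.mp (hcard F hF)]
    have := Finset.card_le_card hsub
    simp only [Finset.card_singleton] at this
    simp only [pow_zero] at hsize
    omega
  | succ n ih =>
    intro l hl ℱ hcard hsize
    by_cases h : ∀ X : Finset α, (∀ F ∈ ℱ, (F ∩ X).Nonempty) → l ≤ X.card
    · refine ⟨∅, ?_, ?_⟩
      · intro G hG
        exact (Finset.mem_filter.mp hG).2
      · intro X hX
        apply h
        intro F hF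
        have hne : (∅ : Finset α) ⊂ F := by
          refine Finset.empty_ssubset.mpr ?_
          rw [← Finset.card_pos, hcard F hF]; omega
        have := hX F (Finset.mem_filter.mpr ⟨hF, hne⟩)
        simpa using this
    · push_neg at h
      obtain ⟨X, hXblock, hXcard⟩ := h
      have cover : ℱ ⊆ X.biUnion (fun x => ℱ.filter fun F => x ∈ F) := by
        intro F hF
        obtain ⟨y, hy⟩ := hXblock F hF
        simp only [Finset.mem_inter] at hy
        exact Finset.mem_biUnion.mpr ⟨y, hy.2, Finset.mem_filter.mpr ⟨hF, hy.1⟩⟩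
      have hx : ∃ x ∈ X, (l - 1) ^ n < (ℱ.filter fun F => x ∈ F).card := by
        by_contra hc
        push_neg at hc
        have hle : ℱ.card ≤ X.card * (l - 1) ^ n := by
          calc ℱ.card ≤ (X.biUnion fun x => ℱ.filter fun F => x ∈ F).card :=
                Finset.card_le_card cover
            _ ≤ ∑ x ∈ X, (ℱ.filter fun F => x ∈ F).card := Finset.card_biUnion_le
            _ ≤ ∑ _x ∈ X, (l - 1) ^ n := Finset.sum_le_sum fun x hxX => hc x hxX
            _ = X.card * (l - 1) ^ n := by rw [Finset.sum_const, smul_eq_mul]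
        have h2 : ℱ.card ≤ (l - 1) * (l - 1) ^ n :=
          hle.trans (Nat.mul_le_mul_right _ (by omega))
        rw [← pow_succ'] at h2
        omega
      obtain ⟨x, hxX, hxbig⟩ := hx
      set ℱx := ℱ.filter (fun F => x ∈ F) with hFx
      set ℱ' := ℱx.image (fun F => F.erase x) with hF'
      have hinj : Set.InjOn (fun F : Finset α => F.erase x) (ℱx : Set (Finset α)) := by
        intro A hA B hB hAB
        simp only [hFx, Finset.coe_filter, Set.mem_setOf_eq] at hA hB
        have hins : insert x (A.erase x) = insert x (B.erase x) := by
          simp only at hAB; rw [hAB]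
        rwa [Finset.insert_erase hA.2, Finset.insert_erase hB.2] at hins
      have hcard' : ℱ'.card = ℱx.card := Finset.card_image_of_injOn hinj
      have hmem' : ∀ G ∈ ℱ', G.card = n := by
        intro G hG
        obtain ⟨F, hF, rfl⟩ := Finset.mem_image.mp hG
        simp only [hFx, Finset.mem_filter] at hF
        rw [Finset.card_erase_of_mem hF.2, hcard F hF.1]; omega
      obtain ⟨C', hC'1, hC'2⟩ := ih l hl ℱ' hmem' (by omega)
      have hne : (ℱ'.filter fun G => C' ⊂ G).Nonempty := by
        by_contra hemp
        rw [Finset.not_nonempty_iff_eq_empty] at hemp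
        have := hC'2 ∅ (by simp [hemp])
        simp at this
        omega
      have hxC' : x ∉ C' := by
        obtain ⟨G, hG⟩ := hne
        simp only [Finset.mem_filter] at hG
        obtain ⟨F, hF, rfl⟩ := Finset.mem_image.mp hG.1
        exact fun hmem => (Finset.notMem_erase x F) (hG.2.subset hmem)
      refine ⟨insert x C', ?_, ?_⟩
      · intro G hG; exact (Finset.mem_filter.mp hG).2
      · intro Y hY
        apply hC'2
        intro G hG
        simp only [Finset.mem_filter] at hG
        obtain ⟨F, hF, rfl⟩ := Finset.mem_image.mp hG.1
        simp only [hFx, Finset.mem_filter] at hF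
        have hCF : insert x C' ⊂ F := by
          constructor
          · intro y hy
            rcases Finset.mem_insert.mp hy with rfl | hy
            · exact hF.2
            · exact Finset.mem_of_mem_erase (hG.2.subset hy)
          · intro hsub
            obtain ⟨z, hz1, hz2⟩ := Finset.exists_of_ssubset hG.2
            have hzF : z ∈ F := Finset.mem_of_mem_erase hz1
            rcases Finset.mem_insert.mp (hsub hzF) with rfl | hzC
            · exact (Finset.notMem_erase z F) hz1
            · exact hz2 hzC
        have hblock := hY F (Finset.mem_filter.mpr ⟨hF.1, hCF⟩)
        have heq : F \ insert x C' = (F.erase x) \ C' := by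
          ext y
          simp only [Finset.mem_sdiff, Finset.mem_erase, Finset.mem_insert]
          tauto
        rwa [heq] at hblock

/-- **Flower lemma (Håstad et al., cf. Jukna).** If `ℱ` is a finite family of finite sets,
each of cardinality exactly `d`, and `|ℱ| > (l-1)^d`, then `ℱ` contains an `l`-flower:
there is a core `C` such that the subfamily of members strictly containing `C` is an
`l`-flower with core `C`. -/
theorem flower_lemma {α : Type*} [DecidableEq α] (d l : ℕ) (hd : 1 ≤ d) (hl : 1 ≤ l)
    (ℱ : Finset (Finset α)) (hcard : ∀ F ∈ ℱ, F.card = d)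
    (hsize : (l - 1) ^ d < ℱ.card) :
    ∃ C : Finset α, IsFlower l C (ℱ.filter fun F => C ⊂ F) := by
  exact flower_aux d l hl ℱ hcard hsize
end

section
/- Let d ≥ 1 and l ≥ 1 be integers, let ℱ be a finite family of finite sets each of cardinality at most d, and let C be a finite set with |C| < d. Suppose (1) the number of sets F ∈ ℱ with C ⊆ F is at least l^{d−|C|}, and (2) for every finite set C' with C ⊊ C' and |C'| ≤ d, the number of sets F ∈ ℱ with C' ⊆ F is at most l^{d−|C'|}. Then either C ∈ ℱ, or ℱ contains an l-flower with core C, i.e., every blocking set for the restriction {F \ C : F ∈ ℱ, C ⊊ F} has at least l elements. -/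
/-- **Flower counting lemma.** Let `ℱ` be a finite family of sets each of cardinality at
most `d` and let `C` be a set with `|C| < d`. If (1) `ℱ` has at least `l^(d-|C|)` supersets
of `C` and (2) at most `l^(d-|C'|)` supersets of any `C' ⊋ C` with `|C'| ≤ d`, then either
`C ∈ ℱ` or `ℱ` contains an `l`-flower with core `C`. -/
theorem flower_counting {α : Type*} [DecidableEq α] (d l : ℕ) (hd : 1 ≤ d) (hl : 1 ≤ l)
    (ℱ : Finset (Finset α)) (hcard : ∀ F ∈ ℱ, F.card ≤ d)
    (C : Finset α) (hC : C.card < d)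
    (h1 : l ^ (d - C.card) ≤ (ℱ.filter fun F => C ⊆ F).card)
    (h2 : ∀ C' : Finset α, C ⊂ C' → C'.card ≤ d →
      (ℱ.filter fun F => C' ⊆ F).card ≤ l ^ (d - C'.card)) :
    C ∈ ℱ ∨ IsFlower l C (ℱ.filter fun F => C ⊂ F) := by
  by_cases hCF : C ∈ ℱ
  · exact Or.inl hCF
  right
  refine ⟨fun G hG => (Finset.mem_filter.mp hG).2, ?_⟩
  intro X hX
  by_contra hlt
  push_neg at hlt
  have heq : ℱ.filter (fun F => C ⊆ F) = ℱ.filter (fun F => C ⊂ F) := by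
    apply Finset.filter_congr
    intro F hF
    constructor
    · intro h
      exact h.ssubset_of_ne (fun hne => hCF (hne ▸ hF))
    · exact fun h => h.subset
  rw [heq] at h1
  set 𝒢 := ℱ.filter (fun F => C ⊂ F) with h𝒢
  have hsub : 𝒢 ⊆ (X \ C).biUnion (fun x => ℱ.filter fun F => insert x C ⊆ F) := by
    intro F hF
    obtain ⟨x, hx⟩ := hX F hF
    rw [Finset.mem_inter, Finset.mem_sdiff] at hx
    refine Finset.mem_biUnion.mpr ⟨x, Finset.mem_sdiff.mpr ⟨hx.2, hx.1.2⟩, ?_⟩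
    exact Finset.mem_filter.mpr ⟨(Finset.mem_filter.mp hF).1,
      Finset.insert_subset hx.1.1 (Finset.mem_filter.mp hF).2.subset⟩
  have hbound : 𝒢.card ≤ (X \ C).card * l ^ (d - (C.card + 1)) := by
    calc 𝒢.card ≤ ∑ x ∈ X \ C, (ℱ.filter fun F => insert x C ⊆ F).card :=
          (Finset.card_le_card hsub).trans Finset.card_biUnion_le
      _ ≤ ∑ _x ∈ X \ C, l ^ (d - (C.card + 1)) := by
          apply Finset.sum_le_sum
          intro x hx
          have hxC : x ∉ C := (Finset.mem_sdiff.mp hx).2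
          have hcard' : (insert x C).card = C.card + 1 :=
            Finset.card_insert_of_notMem hxC
          have := h2 (insert x C) (Finset.ssubset_insert hxC) (by omega)
          rwa [hcard'] at this
      _ = (X \ C).card * l ^ (d - (C.card + 1)) := by
          rw [Finset.sum_const, smul_eq_mul]

  have hXC : (X \ C).card ≤ X.card := Finset.card_le_card (Finset.sdiff_subset)
  have hp : 1 ≤ l ^ (d - (C.card + 1)) := Nat.one_le_pow _ _ hl
  have hpow : l ^ (d - C.card) = l * l ^ (d - (C.card + 1)) := by
    have : d - C.card = (d - (C.card + 1)) + 1 := by omega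
    rw [this, pow_succ, mul_comm]
  have hm : ((X \ C).card + 1) * l ^ (d - (C.card + 1)) ≤ l * l ^ (d - (C.card + 1)) :=
    Nat.mul_le_mul_right _ (by omega)
  rw [add_mul, one_mul] at hm
  omega
end

section
/- Let d ≥ 1 and l ≥ 1 be integers, let ℱ be a finite family of finite sets each of cardinality at most d, and let C be a finite set with |C| < d. Suppose (1) the number of sets F ∈ ℱ with C ⊆ F is strictly greater than (l−1)^{d−|C|}, and (2) for every finite set C' with C ⊊ C' and |C'| ≤ d, the number of sets F ∈ ℱ with C' ⊆ F is at most (l−1)^{d−|C'|}. Then every set X that intersects F \ C for every F ∈ ℱ with C ⊆ F has at least l elements; in particular, if C ∉ ℱ then ℱ contains an l-flower with core C. -/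
/-- **Sharpened flower counting lemma.** Let `ℱ` be a finite family of sets each of
cardinality at most `d` and let `C` be a set with `|C| < d`. If (1) `ℱ` has strictly more
than `(l-1)^(d-|C|)` supersets of `C` and (2) at most `(l-1)^(d-|C'|)` supersets of any
`C' ⊋ C` with `|C'| ≤ d`, then every set `X` that intersects `F \ C` for every `F ∈ ℱ`
with `C ⊆ F` has at least `l` elements; in particular, if `C ∉ ℱ` then `ℱ` contains an
`l`-flower with core `C`. -/
theorem flower_counting_sharp {α : Type*} [DecidableEq α] (d l : ℕ) (hd : 1 ≤ d) (hl : 1 ≤ l)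
    (ℱ : Finset (Finset α)) (hcard : ∀ F ∈ ℱ, F.card ≤ d)
    (C : Finset α) (hC : C.card < d)
    (h1 : (l - 1) ^ (d - C.card) < (ℱ.filter fun F => C ⊆ F).card)
    (h2 : ∀ C' : Finset α, C ⊂ C' → C'.card ≤ d →
      (ℱ.filter fun F => C' ⊆ F).card ≤ (l - 1) ^ (d - C'.card)) :
    (∀ X : Finset α, (∀ F ∈ ℱ, C ⊆ F → ((F \ C) ∩ X).Nonempty) → l ≤ X.card) ∧
    (C ∉ ℱ → IsFlower l C (ℱ.filter fun F => C ⊂ F)) := by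
  have main : ∀ X : Finset α, (∀ F ∈ ℱ, C ⊆ F → ((F \ C) ∩ X).Nonempty) → l ≤ X.card := by
    intro X hX
    by_contra hlt
    push_neg at hlt
    have hXle : X.card ≤ l - 1 := by omega
    have hsub : (ℱ.filter fun F => C ⊆ F) ⊆
        (X \ C).biUnion (fun x => ℱ.filter fun F => insert x C ⊆ F) := by
      intro F hF
      simp only [Finset.mem_filter] at hF
      obtain ⟨x, hx⟩ := hX F hF.1 hF.2
      simp only [Finset.mem_inter, Finset.mem_sdiff] at hx
      refine Finset.mem_biUnion.2 ⟨x, Finset.mem_sdiff.2 ⟨hx.2, hx.1.2⟩, ?_⟩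
      simp only [Finset.mem_filter]
      exact ⟨hF.1, Finset.insert_subset hx.1.1 hF.2⟩
    have hbound : ∀ x ∈ X \ C,
        (ℱ.filter fun F => insert x C ⊆ F).card ≤ (l - 1) ^ (d - C.card - 1) := by
      intro x hx
      have hxC : x ∉ C := (Finset.mem_sdiff.1 hx).2
      have hc : (insert x C).card = C.card + 1 := Finset.card_insert_of_notMem hxC
      have := h2 (insert x C) (Finset.ssubset_insert hxC) (by omega)
      rwa [hc, show d - (C.card + 1) = d - C.card - 1 from by omega] at this
    have hcc := Finset.card_le_card hsub
    have hb : ((X \ C).biUnion fun x => ℱ.filter fun F => insert x C ⊆ F).card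
        ≤ (X \ C).card * (l - 1) ^ (d - C.card - 1) := by
      calc _ ≤ ∑ x ∈ X \ C, (ℱ.filter fun F => insert x C ⊆ F).card :=
            Finset.card_biUnion_le
        _ ≤ ∑ _x ∈ X \ C, (l - 1) ^ (d - C.card - 1) := Finset.sum_le_sum hbound
        _ = _ := by rw [Finset.sum_const, smul_eq_mul]
    have hXC : (X \ C).card ≤ l - 1 :=
      le_trans (Finset.card_le_card Finset.sdiff_subset) hXle
    have hfin : (ℱ.filter fun F => C ⊆ F).card ≤ (l - 1) * (l - 1) ^ (d - C.card - 1) :=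
      le_trans (le_trans hcc hb) (Nat.mul_le_mul_right _ hXC)
    have hp : (l - 1) * (l - 1) ^ (d - C.card - 1) = (l - 1) ^ (d - C.card) := by
      rw [← pow_succ']
      congr 1
      omega
    rw [hp] at hfin
    exact absurd h1 (not_lt.2 hfin)
  refine ⟨main, fun hCF => ⟨?_, ?_⟩⟩
  · intro G hG; exact (Finset.mem_filter.1 hG).2
  · intro X hX
    apply main
    intro F hF hCF'
    have hss : C ⊂ F := lt_of_le_of_ne hCF' (by rintro rfl; exact hCF hF)
    exact hX F (Finset.mem_filter.2 ⟨hF, hss⟩)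
end

section
/- Let ℱ be a finite family of finite sets, let k ∈ ℕ, and let C be a finite set. Suppose that either C ∈ ℱ or ℱ contains a (k+1)-flower with core C. Then every hitting set S for ℱ with |S| ≤ k satisfies S ∩ C ≠ ∅. -/
/-- If `C ∈ ℱ` or `ℱ` contains a `(k+1)`-flower with core `C`, then every hitting set of
`ℱ` with at most `k` elements must intersect `C`. -/
theorem flower_forces_core {α : Type*} [DecidableEq α] (ℱ : Finset (Finset α)) (k : ℕ)
    (C : Finset α)
    (h : C ∈ ℱ ∨ ∃ 𝒢 ⊆ ℱ, IsFlower (k + 1) C 𝒢)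
    (S : Finset α) (hhit : ∀ F ∈ ℱ, (S ∩ F).Nonempty) (hS : S.card ≤ k) :
    (S ∩ C).Nonempty := by
  rcases h with hC | ⟨𝒢, h𝒢ℱ, _, hblock⟩
  · exact hhit C hC
  · by_contra hempty
    rw [Finset.not_nonempty_iff_eq_empty] at hempty
    have : k + 1 ≤ S.card := by
      apply hblock
      intro G hG
      obtain ⟨x, hx⟩ := hhit G (h𝒢ℱ hG)
      rw [Finset.mem_inter] at hx
      refine ⟨x, ?_⟩
      rw [Finset.mem_inter, Finset.mem_sdiff]
      refine ⟨⟨hx.2, fun hxC => ?_⟩, hx.1⟩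
      have : x ∈ S ∩ C := Finset.mem_inter.mpr ⟨hx.1, hxC⟩
      simp [hempty] at this
    omega
end

section
/- Let d ≥ 1 and k ∈ ℕ, let ℱ be a finite family of finite sets each of cardinality at most d, and let ℱ' ⊆ ℱ. Suppose (i) for every finite set C with |C| ≤ d, the number of sets F ∈ ℱ' with C ⊆ F is at most (k+1)^{d−|C|}, and (ii) for every F ∈ ℱ \ ℱ' there exists C ⊆ F such that the number of sets F' ∈ ℱ' with C ⊆ F' is at least (k+1)^{d−|C|}. Then for every set S with |S| ≤ k, S is a hitting set for ℱ if and only if S is a hitting set for ℱ'. -/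
/-- **Correctness of the d-Hitting Set kernelization.** Let `ℱ` be a finite family of sets
each of cardinality at most `d` and let `ℱ' ⊆ ℱ`. Suppose (i) for every set `C` with
`|C| ≤ d`, `ℱ'` has at most `(k+1)^(d-|C|)` supersets of `C`, and (ii) every discarded set
`F ∈ ℱ \ ℱ'` has a subset `C` with at least `(k+1)^(d-|C|)` supersets in `ℱ'`. Then a set
of size at most `k` is a hitting set for `ℱ` iff it is a hitting set for `ℱ'`. -/
theorem hittingSet_kernel_correct {α : Type*} [DecidableEq α] (d k : ℕ) (hd : 1 ≤ d)
    (ℱ ℱ' : Finset (Finset α)) (hsub : ℱ' ⊆ ℱ)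
    (hcard : ∀ F ∈ ℱ, F.card ≤ d)
    (hinv : ∀ C : Finset α, C.card ≤ d →
      (ℱ'.filter fun F => C ⊆ F).card ≤ (k + 1) ^ (d - C.card))
    (hdisc : ∀ F ∈ ℱ, F ∉ ℱ' → ∃ C ⊆ F,
      (k + 1) ^ (d - C.card) ≤ (ℱ'.filter fun F' => C ⊆ F').card) :
    ∀ S : Finset α, S.card ≤ k →
      ((∀ F ∈ ℱ, (S ∩ F).Nonempty) ↔ (∀ F ∈ ℱ', (S ∩ F).Nonempty)) := by
  intro S hS
  constructor
  · intro h F hF; exact h F (hsub hF)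
  · intro h F hF
    by_cases hF' : F ∈ ℱ'
    · exact h F hF'
    obtain ⟨C, hCF, hcount⟩ := hdisc F hF hF'
    suffices hne : (S ∩ C).Nonempty by
      obtain ⟨x, hx⟩ := hne
      rw [Finset.mem_inter] at hx
      exact ⟨x, Finset.mem_inter.2 ⟨hx.1, hCF hx.2⟩⟩
    by_cases hCd : d ≤ C.card
    · have h0 : d - C.card = 0 := Nat.sub_eq_zero_of_le hCd
      rw [h0, pow_zero] at hcount
      obtain ⟨F', hF'mem⟩ := Finset.card_pos.mp hcount
      rw [Finset.mem_filter] at hF'mem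
      have hEq : C = F' := Finset.eq_of_subset_of_card_le hF'mem.2
        (le_trans (hcard F' (hsub hF'mem.1)) hCd)
      rw [hEq]
      exact h F' hF'mem.1
    · push_neg at hCd
      by_contra hempty
      rw [Finset.not_nonempty_iff_eq_empty] at hempty
      have key : (ℱ'.filter fun F' => C ⊆ F') ⊆
          S.biUnion (fun x => ℱ'.filter fun F' => insert x C ⊆ F') := by
        intro F' hmem
        rw [Finset.mem_filter] at hmem
        obtain ⟨x, hx⟩ := h F' hmem.1
        rw [Finset.mem_inter] at hx
        exact Finset.mem_biUnion.2 ⟨x, hx.1, Finset.mem_filter.2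
          ⟨hmem.1, Finset.insert_subset hx.2 hmem.2⟩⟩
      have hb : ((ℱ'.filter fun F' => C ⊆ F')).card ≤ S.card * (k + 1) ^ (d - C.card - 1) := by
        calc ((ℱ'.filter fun F' => C ⊆ F')).card
            ≤ (S.biUnion (fun x => ℱ'.filter fun F' => insert x C ⊆ F')).card :=
              Finset.card_le_card key
          _ ≤ ∑ x ∈ S, (ℱ'.filter fun F' => insert x C ⊆ F').card := Finset.card_biUnion_le
          _ ≤ ∑ _x ∈ S, (k + 1) ^ (d - C.card - 1) := by
              apply Finset.sum_le_sum
              intro x hx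
              have hxC : x ∉ C := fun hc =>
                (Finset.notMem_empty x) (hempty ▸ Finset.mem_inter.2 ⟨hx, hc⟩)
              have hcardins : (insert x C).card = C.card + 1 :=
                Finset.card_insert_of_notMem hxC
              have := hinv (insert x C) (by omega)
              rwa [hcardins, show d - (C.card + 1) = d - C.card - 1 from by omega] at this
          _ = S.card * (k + 1) ^ (d - C.card - 1) := by
              rw [Finset.sum_const, smul_eq_mul]
      have hfin : (k + 1) ^ (d - C.card) ≤ k * (k + 1) ^ (d - C.card - 1) :=
        le_trans hcount (hb.trans (Nat.mul_le_mul_right _ hS))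
      have hm : d - C.card = (d - C.card - 1) + 1 := by omega
      rw [hm, pow_succ] at hfin
      simp only [Nat.add_sub_cancel] at hfin
      have hp : 1 ≤ (k + 1) ^ (d - C.card - 1) := Nat.one_le_pow _ _ (Nat.succ_pos k)
      nlinarith
end

section
/- Let d ≥ 1 and k ≥ 1, let ℱ be a finite family of non-empty finite sets each of cardinality at most d, and let ℱ' ⊆ ℱ. Suppose (i) for every finite set C with |C| ≤ d, the number of sets F ∈ ℱ' with C ⊆ F is at most (d(k−1)+1)^{d−|C|}, and (ii) for every F ∈ ℱ \ ℱ' there exists C ⊆ F such that the number of sets F' ∈ ℱ' with C ⊆ F' is at least (d(k−1)+1)^{d−|C|}. Then ℱ contains a k-packing if and only if ℱ' contains a k-packing. -/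
/-!
Let `M = d(k-1) + 1`. Given a `k`-packing in `ℱ` and a member `F ∉ ℱ'`, the other `k - 1`
members cover a set `W` of fewer than `M` points, disjoint from `F`. Take `C ⊆ F` as in (ii).
By (i), for each `x ∈ W` at most `M^(d-|C|-1)` members of `ℱ'` contain `C ∪ {x}`, so fewer
than `M^(d-|C|)` supersets of `C` in `ℱ'` meet `W`; by (ii) some superset `F' ∈ ℱ'` of `C`
avoids `W`, and swapping `F` for `F'` gives a `k`-packing with fewer members outside `ℱ'`.
-/

open Finset

section

variable {α : Type*} [DecidableEq α]

section Counting

variable {d M : ℕ} {𝒢 : Finset (Finset α)} {C W : Finset α}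

lemma card_filter_insert_subset_mul_le (hcard : ∀ F ∈ 𝒢, #F ≤ d)
    (hinv : ∀ C : Finset α, #C ≤ d → #{F ∈ 𝒢 | C ⊆ F} ≤ M ^ (d - #C))
    {x : α} (hx : x ∉ C) :
    #{F ∈ 𝒢 | insert x C ⊆ F} * M ≤ M ^ (d - #C) := by
  have hxC : #(insert x C) = #C + 1 := card_insert_of_notMem hx
  rcases lt_or_ge #C d with hC | hC
  · calc #{F ∈ 𝒢 | insert x C ⊆ F} * M ≤ M ^ (d - (#C + 1)) * M := by
          gcongr
          simpa only [hxC] using hinv (insert x C) (by omega)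
      _ = M ^ (d - #C) := by rw [← pow_succ]; congr 1; omega
  · have hempty : {F ∈ 𝒢 | insert x C ⊆ F} = ∅ :=
      filter_eq_empty_iff.2 fun F hF hxCF => by
        have := card_le_card hxCF
        have := hcard F hF
        omega
    simp [hempty]

lemma card_filter_subset_not_disjoint_mul_le (hcard : ∀ F ∈ 𝒢, #F ≤ d)
    (hinv : ∀ C : Finset α, #C ≤ d → #{F ∈ 𝒢 | C ⊆ F} ≤ M ^ (d - #C))
    (hCW : Disjoint C W) :
    #{F ∈ 𝒢 | C ⊆ F ∧ ¬Disjoint F W} * M ≤ #W * M ^ (d - #C) := by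
  have hcover : {F ∈ 𝒢 | C ⊆ F ∧ ¬Disjoint F W} ⊆
      W.biUnion fun x => {F ∈ 𝒢 | insert x C ⊆ F} := by
    intro F hF
    obtain ⟨hF𝒢, hCF, hFW⟩ := mem_filter.1 hF
    obtain ⟨x, hxF, hxW⟩ := not_disjoint_iff.1 hFW
    exact mem_biUnion.2 ⟨x, hxW, mem_filter.2 ⟨hF𝒢, insert_subset hxF hCF⟩⟩
  calc #{F ∈ 𝒢 | C ⊆ F ∧ ¬Disjoint F W} * M
      ≤ #(W.biUnion fun x => {F ∈ 𝒢 | insert x C ⊆ F}) * M := by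
        gcongr
    _ ≤ (∑ x ∈ W, #{F ∈ 𝒢 | insert x C ⊆ F}) * M := by
        gcongr
        exact card_biUnion_le
    _ = ∑ x ∈ W, #{F ∈ 𝒢 | insert x C ⊆ F} * M := sum_mul _ _ _
    _ ≤ ∑ _x ∈ W, M ^ (d - #C) := sum_le_sum fun x hx =>
        card_filter_insert_subset_mul_le hcard hinv (disjoint_right.1 hCW hx)
    _ = #W * M ^ (d - #C) := by rw [sum_const, smul_eq_mul]

lemma exists_mem_superset_disjoint (hcard : ∀ F ∈ 𝒢, #F ≤ d)
    (hinv : ∀ C : Finset α, #C ≤ d → #{F ∈ 𝒢 | C ⊆ F} ≤ M ^ (d - #C))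
    (hCW : Disjoint C W) (hW : #W < M) (hC : M ^ (d - #C) ≤ #{F ∈ 𝒢 | C ⊆ F}) :
    ∃ F ∈ 𝒢, C ⊆ F ∧ Disjoint F W := by
  by_contra! hmeet
  have hsame : {F ∈ 𝒢 | C ⊆ F ∧ ¬Disjoint F W} = {F ∈ 𝒢 | C ⊆ F} :=
    filter_congr fun F hF => and_iff_left_of_imp (hmeet F hF)
  have hbound := card_filter_subset_not_disjoint_mul_le hcard hinv hCW
  rw [hsame] at hbound
  have hlt : #W * M ^ (d - #C) < M * M ^ (d - #C) :=
    Nat.mul_lt_mul_of_pos_right hW (pow_pos (by omega) _)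
  have := Nat.mul_le_mul_right M hC
  linarith

end Counting

variable {d k : ℕ} {ℱ ℱ' : Finset (Finset α)}

lemma exists_mem_disjoint_biUnion_erase (hsub : ℱ' ⊆ ℱ) (hcard : ∀ F ∈ ℱ, #F ≤ d)
    (hinv : ∀ C : Finset α, #C ≤ d →
      #{F ∈ ℱ' | C ⊆ F} ≤ (d * (k - 1) + 1) ^ (d - #C))
    (hdisc : ∀ F ∈ ℱ, F ∉ ℱ' → ∃ C ⊆ F,
      (d * (k - 1) + 1) ^ (d - #C) ≤ #{F' ∈ ℱ' | C ⊆ F'})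
    {P : Finset (Finset α)} (hPℱ : P ⊆ ℱ) (hP : (P : Set (Finset α)).PairwiseDisjoint id)
    (hPk : #P = k) {F : Finset α} (hFP : F ∈ P) (hFℱ' : F ∉ ℱ') :
    ∃ F' ∈ ℱ', Disjoint F' ((P.erase F).biUnion id) := by
  obtain ⟨C, hCF, hC⟩ := hdisc F (hPℱ hFP) hFℱ'
  have hFW : Disjoint F ((P.erase F).biUnion id) :=
    (disjoint_biUnion_right _ _ _).2 fun B hB =>
      hP hFP (mem_of_mem_erase hB) (ne_of_mem_erase hB).symm
  have hW : #((P.erase F).biUnion id) < d * (k - 1) + 1 := by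
    have := card_biUnion_le_card_mul (P.erase F) id d fun B hB =>
      hcard B (hPℱ (mem_of_mem_erase hB))
    rw [card_erase_of_mem hFP, hPk] at this
    linarith
  obtain ⟨F', hF'ℱ', -, hF'W⟩ := exists_mem_superset_disjoint
    (fun F hF => hcard F (hsub hF)) hinv (hFW.mono_left hCF) hW hC
  exact ⟨F', hF'ℱ', hF'W⟩

lemma exists_packing_subset_of_packing (hsub : ℱ' ⊆ ℱ) (hne : ∀ F ∈ ℱ, F.Nonempty)
    (hcard : ∀ F ∈ ℱ, #F ≤ d)
    (hinv : ∀ C : Finset α, #C ≤ d →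
      #{F ∈ ℱ' | C ⊆ F} ≤ (d * (k - 1) + 1) ^ (d - #C))
    (hdisc : ∀ F ∈ ℱ, F ∉ ℱ' → ∃ C ⊆ F,
      (d * (k - 1) + 1) ^ (d - #C) ≤ #{F' ∈ ℱ' | C ⊆ F'})
    {P : Finset (Finset α)} (hPℱ : P ⊆ ℱ) (hP : (P : Set (Finset α)).PairwiseDisjoint id)
    (hPk : #P = k) :
    ∃ Q ⊆ ℱ', #Q = k ∧ (Q : Set (Finset α)).PairwiseDisjoint id := by
  by_cases hPℱ' : P ⊆ ℱ'
  · exact ⟨P, hPℱ', hPk, hP⟩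
  obtain ⟨F, hFP, hFℱ'⟩ := not_subset.1 hPℱ'
  obtain ⟨F', hF'ℱ', hF'W⟩ :=
    exists_mem_disjoint_biUnion_erase hsub hcard hinv hdisc hPℱ hP hPk hFP hFℱ'
  have hF'P : F' ∉ P.erase F := fun hF'P =>
    (hne F' (hsub hF'ℱ')).ne_empty <|
      disjoint_self.1 (hF'W.mono_right (subset_biUnion_of_mem id hF'P))
  refine exists_packing_subset_of_packing hsub hne hcard hinv hdisc
    (P := insert F' (P.erase F))
    (insert_subset (hsub hF'ℱ') ((erase_subset F P).trans hPℱ)) ?_ ?_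
  · rw [coe_insert, coe_erase]
    exact (hP.subset Set.sdiff_subset).insert fun B hB _ =>
      hF'W.mono_right (subset_biUnion_of_mem id (mem_coe.1 (by rwa [coe_erase])))
  · rw [card_insert_of_notMem hF'P, card_erase_add_one hFP, hPk]
termination_by #(P \ ℱ')
decreasing_by
  rw [insert_sdiff_of_mem _ hF'ℱ', erase_sdiff_comm]
  exact card_erase_lt_of_mem (mem_sdiff.2 ⟨hFP, hFℱ'⟩)

end

theorem setPacking_kernel_correct_general {α : Type*} [DecidableEq α] (d k : ℕ)
    (ℱ ℱ' : Finset (Finset α)) (hsub : ℱ' ⊆ ℱ)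
    (hne : ∀ F ∈ ℱ, F.Nonempty) (hcard : ∀ F ∈ ℱ, F.card ≤ d)
    (hinv : ∀ C : Finset α, C.card ≤ d →
      (ℱ'.filter fun F => C ⊆ F).card ≤ (d * (k - 1) + 1) ^ (d - C.card))
    (hdisc : ∀ F ∈ ℱ, F ∉ ℱ' → ∃ C ⊆ F,
      (d * (k - 1) + 1) ^ (d - C.card) ≤ (ℱ'.filter fun F' => C ⊆ F').card) :
    (∃ P ⊆ ℱ, P.card = k ∧ ∀ A ∈ P, ∀ B ∈ P, A ≠ B → Disjoint A B) ↔
    (∃ P ⊆ ℱ', P.card = k ∧ ∀ A ∈ P, ∀ B ∈ P, A ≠ B → Disjoint A B) := by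
  constructor
  · rintro ⟨P, hPℱ, hPk, hP⟩
    obtain ⟨Q, hQℱ', hQk, hQ⟩ := exists_packing_subset_of_packing hsub hne hcard hinv hdisc
      hPℱ (fun A hA B hB => hP A hA B hB) hPk
    exact ⟨Q, hQℱ', hQk, fun A hA B hB => hQ hA hB⟩
  · rintro ⟨P, hPℱ', hPk, hP⟩
    exact ⟨P, hPℱ'.trans hsub, hPk, hP⟩

/-- **Correctness of the d-Set Packing kernelization.** Let `ℱ` be a finite family of
non-empty sets each of cardinality at most `d` and let `ℱ' ⊆ ℱ`. Suppose (i) for every set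
`C` with `|C| ≤ d`, `ℱ'` has at most `(d(k-1)+1)^(d-|C|)` supersets of `C`, and (ii) every
discarded set `F ∈ ℱ \ ℱ'` has a subset `C` with at least `(d(k-1)+1)^(d-|C|)` supersets
in `ℱ'`. Then `ℱ` contains `k` pairwise disjoint sets iff `ℱ'` does. -/
theorem setPacking_kernel_correct {α : Type*} [DecidableEq α] (d k : ℕ)
    (hd : 1 ≤ d) (hk : 1 ≤ k)
    (ℱ ℱ' : Finset (Finset α)) (hsub : ℱ' ⊆ ℱ)
    (hne : ∀ F ∈ ℱ, F.Nonempty) (hcard : ∀ F ∈ ℱ, F.card ≤ d)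
    (hinv : ∀ C : Finset α, C.card ≤ d →
      (ℱ'.filter fun F => C ⊆ F).card ≤ (d * (k - 1) + 1) ^ (d - C.card))
    (hdisc : ∀ F ∈ ℱ, F ∉ ℱ' → ∃ C ⊆ F,
      (d * (k - 1) + 1) ^ (d - C.card) ≤ (ℱ'.filter fun F' => C ⊆ F').card) :
    (∃ P ⊆ ℱ, P.card = k ∧ ∀ A ∈ P, ∀ B ∈ P, A ≠ B → Disjoint A B) ↔
    (∃ P ⊆ ℱ', P.card = k ∧ ∀ A ∈ P, ∀ B ∈ P, A ≠ B → Disjoint A B) :=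
  setPacking_kernel_correct_general d k ℱ ℱ' hsub hne hcard hinv hdisc
end

section
/- Let d ≥ 1 and k ≥ 1, let ℱ be a finite family of non-empty finite sets each of cardinality at most d, and let ℱ' ⊆ ℱ. Suppose (i) for every finite set C with |C| ≤ d, the number of sets F ∈ ℱ' with C ⊆ F is at most (d(k−1)+1)^{d−|C|}, and (ii) for every F ∈ ℱ \ ℱ' there exists C ⊆ F such that the number of sets F' ∈ ℱ' with C ⊆ F' is at least (d(k−1)+1)^{d−|C|}. Then for every j with 0 ≤ j ≤ k and every set S with |S| ≤ d(k−j), the family ℱ contains a j-packing all of whose members are disjoint from S if and only if ℱ' contains a j-packing all of whose members are disjoint from S. -/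
/-- **Strengthened inductive claim for the d-Set Packing kernelization.** Under the same
hypotheses as the packing-kernel correctness statement, for every `j ≤ k` and every set
`S` with `|S| ≤ d(k-j)`, the family `ℱ` contains `j` pairwise disjoint members all
disjoint from `S` iff `ℱ'` does. -/
theorem setPacking_kernel_avoiding {α : Type*} [DecidableEq α] (d k : ℕ)
    (hd : 1 ≤ d) (hk : 1 ≤ k)
    (ℱ ℱ' : Finset (Finset α)) (hsub : ℱ' ⊆ ℱ)
    (hne : ∀ F ∈ ℱ, F.Nonempty) (hcard : ∀ F ∈ ℱ, F.card ≤ d)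
    (hinv : ∀ C : Finset α, C.card ≤ d →
      (ℱ'.filter fun F => C ⊆ F).card ≤ (d * (k - 1) + 1) ^ (d - C.card))
    (hdisc : ∀ F ∈ ℱ, F ∉ ℱ' → ∃ C ⊆ F,
      (d * (k - 1) + 1) ^ (d - C.card) ≤ (ℱ'.filter fun F' => C ⊆ F').card) :
    ∀ j : ℕ, j ≤ k → ∀ S : Finset α, S.card ≤ d * (k - j) →
      ((∃ P ⊆ ℱ, P.card = j ∧ (∀ A ∈ P, ∀ B ∈ P, A ≠ B → Disjoint A B) ∧
          ∀ A ∈ P, Disjoint A S) ↔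
       (∃ P ⊆ ℱ', P.card = j ∧ (∀ A ∈ P, ∀ B ∈ P, A ≠ B → Disjoint A B) ∧
          ∀ A ∈ P, Disjoint A S)) := by
  classical
  intro j hj S hS
  constructor
  swap
  · rintro ⟨P, hP, h1, h2, h3⟩
    exact ⟨P, hP.trans hsub, h1, h2, h3⟩
  rintro ⟨P, hPF, hPcard, hPdisj, hPS⟩
  have key : ∀ n (P : Finset (Finset α)), (P \ ℱ').card ≤ n → P ⊆ ℱ → P.card = j →
      (∀ A ∈ P, ∀ B ∈ P, A ≠ B → Disjoint A B) → (∀ A ∈ P, Disjoint A S) →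
      ∃ P' ⊆ ℱ', P'.card = j ∧ (∀ A ∈ P', ∀ B ∈ P', A ≠ B → Disjoint A B) ∧
        ∀ A ∈ P', Disjoint A S := by
    intro n
    induction n with
    | zero =>
      intro P hPn hPF hPcard hPdisj hPS
      refine ⟨P, ?_, hPcard, hPdisj, hPS⟩
      intro A hA
      by_contra hA'
      have h1 : A ∈ P \ ℱ' := Finset.mem_sdiff.mpr ⟨hA, hA'⟩
      have h2 := Finset.card_pos.mpr ⟨A, h1⟩
      omega
    | succ n ih =>
      intro P hPn hPF hPcard hPdisj hPS
      by_cases hPsub : P \ ℱ' = ∅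
      · exact ih P (by simp [hPsub]) hPF hPcard hPdisj hPS
      obtain ⟨F, hFmem⟩ := Finset.nonempty_iff_ne_empty.mpr hPsub
      obtain ⟨hFP, hFℱ'⟩ := Finset.mem_sdiff.mp hFmem
      have hFℱ : F ∈ ℱ := hPF hFP
      have hj1 : 1 ≤ j := by
        rw [← hPcard]; exact Finset.card_pos.mpr ⟨F, hFP⟩
      set X := d * (k - 1) + 1 with hX
      set T := S ∪ (P.erase F).biUnion id with hTdef
      have hTcard : T.card ≤ d * (k - 1) := by
        have h1 : ((P.erase F).biUnion id).card ≤ (P.erase F).sum (fun A => A.card) :=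
          Finset.card_biUnion_le
        have h2 : (P.erase F).sum (fun A => A.card) ≤ (P.erase F).card * d :=
          Finset.sum_le_card_nsmul _ _ d (fun A hA => hcard A (hPF (Finset.mem_of_mem_erase hA)))
        have h3 : (P.erase F).card = j - 1 := by
          rw [Finset.card_erase_of_mem hFP, hPcard]
        rw [h3] at h2
        have h4 : T.card ≤ S.card + ((P.erase F).biUnion id).card :=
          Finset.card_union_le _ _
        have h5 : d * (k - j) + (j - 1) * d = d * (k - 1) := by
          rw [mul_comm (j-1) d, ← mul_add]
          congr 1
          omega
        omega
      have hFT : Disjoint F T := by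
        rw [hTdef]
        refine Finset.disjoint_union_right.mpr ⟨hPS F hFP, ?_⟩
        rw [Finset.disjoint_biUnion_right]
        intro A hA
        exact hPdisj F hFP A (Finset.mem_of_mem_erase hA) (Finset.ne_of_mem_erase hA).symm
      obtain ⟨C, hCF, hCcount⟩ := hdisc F hFℱ hFℱ'
      have hCd : C.card ≤ d := le_trans (Finset.card_le_card hCF) (hcard F hFℱ)
      have hClt : C.card < d := by
        rcases lt_or_eq_of_le hCd with h | h
        · exact h
        · exfalso
          have hCeq : C = F := Finset.eq_of_subset_of_card_le hCF
            (by have := hcard F hFℱ; omega)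
          have h1 : 1 ≤ (ℱ'.filter fun F' => C ⊆ F').card := by
            have h2 := hCcount
            rw [show d - C.card = 0 by omega] at h2
            simpa using h2
          obtain ⟨F', hF'⟩ := Finset.card_pos.mp h1
          rw [Finset.mem_filter] at hF'
          have hCeq2 : C = F' := Finset.eq_of_subset_of_card_le hF'.2
            (by have := hcard F' (hsub hF'.1); omega)
          have : F = F' := by rw [← hCeq, hCeq2]
          exact hFℱ' (this ▸ hF'.1)
      set e := d - C.card with he
      have he1 : 1 ≤ e := by omega
      have hxC : ∀ x ∈ T, x ∉ C := fun x hx hxc =>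
        Finset.disjoint_left.mp hFT (hCF hxc) hx
      have hbad : (ℱ'.filter fun F' => C ⊆ F' ∧ ¬ Disjoint F' T).card ≤ T.card * X ^ (e - 1) := by
        have hsubbad : (ℱ'.filter fun F' => C ⊆ F' ∧ ¬ Disjoint F' T) ⊆
            T.biUnion (fun x => ℱ'.filter fun F' => insert x C ⊆ F') := by
          intro F' hF'
          rw [Finset.mem_filter] at hF'
          obtain ⟨hF'ℱ, hCF', hnd⟩ := hF'
          obtain ⟨x, hx1, hx2⟩ := Finset.not_disjoint_iff.mp hnd
          exact Finset.mem_biUnion.mpr ⟨x, hx2,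
            Finset.mem_filter.mpr ⟨hF'ℱ, Finset.insert_subset hx1 hCF'⟩⟩
        calc (ℱ'.filter fun F' => C ⊆ F' ∧ ¬ Disjoint F' T).card
            ≤ (T.biUnion (fun x => ℱ'.filter fun F' => insert x C ⊆ F')).card :=
              Finset.card_le_card hsubbad
          _ ≤ T.sum (fun x => (ℱ'.filter fun F' => insert x C ⊆ F').card) :=
              Finset.card_biUnion_le
          _ ≤ T.sum (fun _ => X ^ (e - 1)) := Finset.sum_le_sum (fun x hx => by
              have h1 : (insert x C).card = C.card + 1 :=
                Finset.card_insert_of_notMem (hxC x hx)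
              have h2 := hinv (insert x C) (by omega)
              rw [h1, show d - (C.card + 1) = e - 1 by omega] at h2
              exact h2)
          _ = T.card * X ^ (e - 1) := by rw [Finset.sum_const, smul_eq_mul]
      have hgood : (ℱ'.filter fun F' => C ⊆ F' ∧ Disjoint F' T).Nonempty := by
        by_contra hg
        rw [Finset.not_nonempty_iff_eq_empty] at hg
        have hcover : (ℱ'.filter fun F' => C ⊆ F') ⊆
            (ℱ'.filter fun F' => C ⊆ F' ∧ Disjoint F' T) ∪
            (ℱ'.filter fun F' => C ⊆ F' ∧ ¬ Disjoint F' T) := by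
          intro F' hF'
          rw [Finset.mem_filter] at hF'
          by_cases hD : Disjoint F' T
          · exact Finset.mem_union_left _ (Finset.mem_filter.mpr ⟨hF'.1, hF'.2, hD⟩)
          · exact Finset.mem_union_right _ (Finset.mem_filter.mpr ⟨hF'.1, hF'.2, hD⟩)
        have h1 : (ℱ'.filter fun F' => C ⊆ F').card ≤
            (ℱ'.filter fun F' => C ⊆ F' ∧ Disjoint F' T).card +
            (ℱ'.filter fun F' => C ⊆ F' ∧ ¬ Disjoint F' T).card :=
          le_trans (Finset.card_le_card hcover) (Finset.card_union_le _ _)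
        rw [hg, Finset.card_empty] at h1
        have h2 : T.card * X ^ (e - 1) < X ^ e := by
          have hXpos : 0 < X ^ (e - 1) := pow_pos (by omega) _
          calc T.card * X ^ (e - 1) ≤ (d * (k - 1)) * X ^ (e - 1) :=
                Nat.mul_le_mul_right _ hTcard
            _ < X * X ^ (e - 1) := by
                have : d * (k - 1) < X := by omega
                exact Nat.mul_lt_mul_of_lt_of_le this le_rfl hXpos
            _ = X ^ e := by
                rw [← pow_succ']
                congr 1
                omega
        omega
      obtain ⟨F', hF'good⟩ := hgood
      rw [Finset.mem_filter] at hF'good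
      obtain ⟨hF'ℱ', hCF', hF'T⟩ := hF'good
      have hsubT : ∀ A ∈ P.erase F, A ⊆ T := by
        intro A hA
        exact (Finset.subset_biUnion_of_mem id hA).trans Finset.subset_union_right
      have hF'ne : F' ∉ P.erase F := by
        intro h
        have h1 : Disjoint F' F' := Finset.disjoint_of_subset_right (hsubT F' h) hF'T
        obtain ⟨x, hx⟩ := hne F' (hsub hF'ℱ')
        exact Finset.disjoint_left.mp h1 hx hx
      set P' := insert F' (P.erase F) with hP'def
      have hP'card : P'.card = j := by
        rw [hP'def, Finset.card_insert_of_notMem hF'ne, Finset.card_erase_of_mem hFP, hPcard]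
        omega
      have hP'sub : P' ⊆ ℱ := by
        rw [hP'def]
        exact Finset.insert_subset (hsub hF'ℱ')
          ((Finset.erase_subset _ _).trans hPF)
      have hP'disj : ∀ A ∈ P', ∀ B ∈ P', A ≠ B → Disjoint A B := by
        intro A hA B hB hAB
        rw [hP'def, Finset.mem_insert] at hA hB
        rcases hA with rfl | hA <;> rcases hB with rfl | hB
        · exact absurd rfl hAB
        · exact Finset.disjoint_of_subset_right (hsubT B hB) hF'T
        · exact (Finset.disjoint_of_subset_right (hsubT A hA) hF'T).symm
        · exact hPdisj A (Finset.mem_of_mem_erase hA) B (Finset.mem_of_mem_erase hB) hAB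
      have hP'S : ∀ A ∈ P', Disjoint A S := by
        intro A hA
        rw [hP'def, Finset.mem_insert] at hA
        rcases hA with rfl | hA
        · exact Finset.disjoint_of_subset_right Finset.subset_union_left hF'T
        · exact hPS A (Finset.mem_of_mem_erase hA)
      have hmeasure : (P' \ ℱ').card ≤ n := by
        have h1 : P' \ ℱ' ⊆ (P \ ℱ').erase F := by
          intro A hA
          rw [Finset.mem_sdiff] at hA
          obtain ⟨hA1, hA2⟩ := hA
          rw [hP'def, Finset.mem_insert] at hA1
          rcases hA1 with rfl | hA1
          · exact absurd hF'ℱ' hA2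
          · rw [Finset.mem_erase] at hA1 ⊢
            exact ⟨hA1.1, Finset.mem_sdiff.mpr ⟨hA1.2, hA2⟩⟩
        have h2 := Finset.card_le_card h1
        have h3 : ((P \ ℱ').erase F).card = (P \ ℱ').card - 1 :=
          Finset.card_erase_of_mem hFmem
        have h4 := Finset.card_pos.mpr ⟨F, hFmem⟩
        omega
      exact ih P' hmeasure hP'sub hP'card hP'disj hP'S
  exact key (P \ ℱ').card P le_rfl hPF hPcard hPdisj hPS
end

section
/- Let ℱ be a finite family of non-empty finite sets, let k ∈ ℕ, and let F be a finite set with F ∩ G = ∅ for every G ∈ ℱ. Then there exists C ⊆ F such that ℱ contains a (k+1)-flower with core C if and only if ℱ has no hitting set of size at most k. -/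
/-- Let `ℱ` be a finite family of non-empty finite sets and let `F` be a set disjoint
from every member of `ℱ`. Then `ℱ` contains a `(k+1)`-flower with core `C` for some
`C ⊆ F` iff `ℱ` has no hitting set of size at most `k`. -/
theorem flower_core_in_disjoint_set_iff_no_small_hittingSet {α : Type*} [DecidableEq α]
    (ℱ : Finset (Finset α)) (hne : ∀ G ∈ ℱ, G.Nonempty) (k : ℕ)
    (F : Finset α) (hdisj : ∀ G ∈ ℱ, F ∩ G = ∅) :
    (∃ C ⊆ F, ∃ 𝒢 ⊆ ℱ, IsFlower (k + 1) C 𝒢) ↔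
    ¬ ∃ S : Finset α, S.card ≤ k ∧ ∀ G ∈ ℱ, (S ∩ G).Nonempty := by
  constructor
  · rintro ⟨C, hCF, 𝒢, h𝒢, hstrict, hblock⟩ ⟨S, hS, hhit⟩
    have : k + 1 ≤ S.card := by
      apply hblock
      intro G hG
      have hFG := hdisj G (h𝒢 hG)
      have hGF : G ∩ C = ∅ := by
        apply Finset.eq_empty_of_forall_notMem
        intro x hx
        rw [Finset.mem_inter] at hx
        have hm : x ∈ F ∩ G := Finset.mem_inter.mpr ⟨hCF hx.2, hx.1⟩
        simp [hFG] at hm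
      have hGC : G \ C = G := by
        rw [Finset.sdiff_eq_self_iff_disjoint, Finset.disjoint_iff_inter_eq_empty, hGF]
      rw [hGC, Finset.inter_comm]
      exact hhit G (h𝒢 hG)
    omega
  · intro h
    refine ⟨∅, Finset.empty_subset _, ℱ, le_refl _, ?_, ?_⟩
    · intro G hG
      exact Finset.empty_ssubset.mpr (hne G hG)
    · intro X hX
      by_contra hc
      push_neg at hc
      exact h ⟨X, by omega, fun G hG => by
        have := hX G hG
        simpa [Finset.inter_comm] using this⟩
end

section
/- Let ℱ be a finite family of m non-empty finite subsets of a set U and let k ≥ 1. Define ℱ' = {F × {i} : F ∈ ℱ, 0 ≤ i ≤ m}, a family of subsets of U × {0,…,m}. Then ℱ contains a k-packing if and only if ℱ' contains a sunflower with k(m+1) petals. -/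
open Finset

private lemma mem_prod_singleton {α : Type*} [DecidableEq α] {F : Finset α} {i : ℕ}
    {x : α × ℕ} : x ∈ F ×ˢ ({i} : Finset ℕ) ↔ x.1 ∈ F ∧ x.2 = i := by
  simp [Finset.mem_product]
  constructor
  · rintro ⟨a, ha, rfl⟩; exact ⟨ha, rfl⟩
  · rintro ⟨h1, h2⟩; exact ⟨x.1, h1, by rw [← h2]⟩

private lemma prod_singleton_inj {α : Type*} [DecidableEq α] {F F' : Finset α} {i i' : ℕ}
    (hF : F.Nonempty) (h : F ×ˢ ({i} : Finset ℕ) = F' ×ˢ ({i'} : Finset ℕ)) :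
    F = F' ∧ i = i' := by
  obtain ⟨a, ha⟩ := hF
  have hai : (a, i) ∈ F' ×ˢ ({i'} : Finset ℕ) := h ▸ mem_prod_singleton.mpr ⟨ha, rfl⟩
  have hii : i = i' := (mem_prod_singleton.mp hai).2
  subst hii
  refine ⟨?_, rfl⟩
  ext x
  constructor
  · intro hx
    exact (mem_prod_singleton.mp (h ▸ (mem_prod_singleton.mpr ⟨hx, rfl⟩ :
      (x, i) ∈ F ×ˢ ({i} : Finset ℕ)))).1
  · intro hx
    exact (mem_prod_singleton.mp (h ▸ (mem_prod_singleton.mpr ⟨hx, rfl⟩ :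
      (x, i) ∈ F' ×ˢ ({i} : Finset ℕ)))).1

private lemma prod_singleton_inter {α : Type*} [DecidableEq α] (F F' : Finset α) (i i' : ℕ) :
    (F ×ˢ ({i} : Finset ℕ)) ∩ (F' ×ˢ ({i'} : Finset ℕ)) =
      (F ∩ F') ×ˢ (({i} : Finset ℕ) ∩ {i'}) := by
  ext x
  simp only [Finset.mem_inter, mem_prod_singleton, Finset.mem_product, Finset.mem_inter,
    Finset.mem_singleton]
  tauto

/-- **Correctness of the NP-hardness reduction for finding sunflowers.** Let `ℱ` be a
finite family of `m` non-empty finite subsets of `U` and `k ≥ 1`. Let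
`ℱ' = {F × {i} : F ∈ ℱ, 0 ≤ i ≤ m}`. Then `ℱ` contains `k` pairwise disjoint sets iff
`ℱ'` contains a sunflower with `k(m+1)` petals. -/
theorem packing_iff_sunflower_in_copies {α : Type*} [DecidableEq α]
    (ℱ : Finset (Finset α)) (hne : ∀ F ∈ ℱ, F.Nonempty) (k : ℕ) (hk : 1 ≤ k) :
    (∃ P ⊆ ℱ, P.card = k ∧ ∀ A ∈ P, ∀ B ∈ P, A ≠ B → Disjoint A B) ↔
    (∃ (C : Finset (α × ℕ)) (𝒢 : Finset (Finset (α × ℕ))),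
      𝒢 ⊆ ((ℱ ×ˢ Finset.range (ℱ.card + 1)).image fun p => p.1 ×ˢ ({p.2} : Finset ℕ)) ∧
      𝒢.card = k * (ℱ.card + 1) ∧
      (∀ G ∈ 𝒢, (G \ C).Nonempty) ∧
      (∀ G ∈ 𝒢, ∀ H ∈ 𝒢, G ≠ H → G ∩ H = C)) := by
  classical
  set m := ℱ.card with hm
  constructor
  · rintro ⟨P, hPsub, hPcard, hPdisj⟩
    refine ⟨∅, (P ×ˢ Finset.range (m+1)).image fun p => p.1 ×ˢ ({p.2} : Finset ℕ),
      ?_, ?_, ?_, ?_⟩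
    · exact Finset.image_subset_image
        (Finset.product_subset_product hPsub (Finset.Subset.refl _))
    · rw [Finset.card_image_of_injOn, Finset.card_product, Finset.card_range, hPcard]
      rintro ⟨F, i⟩ hFi ⟨F', i'⟩ hF'i' heq
      simp only [Finset.mem_coe, Finset.mem_product, Finset.mem_range] at hFi hF'i'
      obtain ⟨hFF', hii'⟩ := prod_singleton_inj (hne F (hPsub hFi.1)) heq
      cases hFF'; cases hii'; rfl
    · intro G hG
      simp only [Finset.mem_image, Finset.mem_product, Finset.mem_range] at hG
      obtain ⟨⟨F, i⟩, ⟨hF, _⟩, rfl⟩ := hG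
      obtain ⟨a, ha⟩ := hne F (hPsub hF)
      exact ⟨(a, i), by simp [mem_prod_singleton, ha]⟩
    · intro G hG H hH hGH
      simp only [Finset.mem_image, Finset.mem_product, Finset.mem_range] at hG hH
      obtain ⟨⟨F, i⟩, ⟨hF, _⟩, rfl⟩ := hG
      obtain ⟨⟨F', i'⟩, ⟨hF', _⟩, rfl⟩ := hH
      rw [prod_singleton_inter]
      by_cases hii : i = i'
      · subst hii
        have hFF' : F ≠ F' := fun h => hGH (by rw [h])
        have := hPdisj F hF F' hF' hFF'
        rw [Finset.disjoint_iff_inter_eq_empty.mp this]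
        simp
      · rw [Finset.singleton_inter_of_notMem (by simpa using hii)]
        simp
  · rintro ⟨C, 𝒢, hsub, hcard, hpet, hcore⟩
    -- every member of 𝒢 has the form F ×ˢ {i}
    have hform : ∀ G ∈ 𝒢, ∃ F ∈ ℱ, ∃ i < m + 1, G = F ×ˢ ({i} : Finset ℕ) := by
      intro G hG
      have := hsub hG
      simp only [Finset.mem_image, Finset.mem_product, Finset.mem_range] at this
      obtain ⟨⟨F, i⟩, ⟨hF, hi⟩, rfl⟩ := this
      exact ⟨F, hF, i, hi, rfl⟩
    -- the index of each petal
    set idx : Finset (α × ℕ) → ℕ := fun G => if h : G.Nonempty then h.choose.2 else 0 with hidx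
    have hidx_eq : ∀ (F : Finset α) (i : ℕ), F.Nonempty →
        idx (F ×ˢ ({i} : Finset ℕ)) = i := by
      intro F i hF
      obtain ⟨a, ha⟩ := hF
      have hne' : (F ×ˢ ({i} : Finset ℕ)).Nonempty := ⟨(a, i), mem_prod_singleton.mpr ⟨ha, rfl⟩⟩
      rw [hidx]
      simp only [dif_pos hne']
      exact (mem_prod_singleton.mp hne'.choose_spec).2
    -- the core is empty
    have hCempty : C = ∅ := by
      -- there are two petals with different indices
      by_contra hC
      -- all petals have the same pairwise intersection C ≠ ∅, so any two petals
      -- share an element, hence have the same index, hence distinct petals give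
      -- distinct sets in ℱ with the same index, so |𝒢| ≤ m.
      have hsame : ∀ G ∈ 𝒢, ∀ H ∈ 𝒢, idx G = idx H := by
        intro G hG H hH
        by_cases hGH : G = H
        · rw [hGH]
        · obtain ⟨F, hF, i, hi, rfl⟩ := hform G hG
          obtain ⟨F', hF', i', hi', rfl⟩ := hform H hH
          have hint := hcore _ hG _ hH hGH
          rw [prod_singleton_inter] at hint
          have hii : i = i' := by
            by_contra h
            rw [Finset.singleton_inter_of_notMem (by simpa using h)] at hint
            simp only [Finset.product_empty] at hint
            exact hC hint.symm
          rw [hidx_eq F i (hne F hF), hidx_eq F' i' (hne F' hF')]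
          exact hii
      -- map each petal to its ℱ-set, injectively
      have hinj : Set.InjOn (fun G : Finset (α × ℕ) => G.image Prod.fst) (↑𝒢 : Set (Finset (α × ℕ))) := by
        intro G hG H hH heq0
        obtain ⟨F, hF, i, hi, rfl⟩ := hform G hG
        obtain ⟨F', hF', i', hi', rfl⟩ := hform H hH
        have heq : (F ×ˢ ({i} : Finset ℕ)).image Prod.fst =
            (F' ×ˢ ({i'} : Finset ℕ)).image Prod.fst := heq0
        have hii : i = i' := by
          have := hsame _ hG _ hH
          rwa [hidx_eq F i (hne F hF), hidx_eq F' i' (hne F' hF')] at this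
        have hFeq : F = F' := by
          have h1 : (F ×ˢ ({i} : Finset ℕ)).image Prod.fst = F := by
            ext x
            simp [mem_prod_singleton, Finset.mem_image]
          have h2 : (F' ×ˢ ({i'} : Finset ℕ)).image Prod.fst = F' := by
            ext x
            simp [mem_prod_singleton, Finset.mem_image]
          rw [← h1, ← h2]
          exact heq
        rw [hFeq, hii]
      have hmaps : ∀ G ∈ 𝒢, G.image Prod.fst ∈ ℱ := by
        intro G hG
        obtain ⟨F, hF, i, hi, rfl⟩ := hform G hG
        have h1 : (F ×ˢ ({i} : Finset ℕ)).image Prod.fst = F := by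
          ext x
          simp [mem_prod_singleton, Finset.mem_image]
        rw [h1]; exact hF
      have hle : 𝒢.card ≤ m := by
        rw [hm]
        exact Finset.card_le_card_of_injOn _ hmaps hinj
      have : k * (m + 1) ≤ m := hcard ▸ hle
      have : m + 1 ≤ m := le_trans (by nlinarith) this
      omega
    subst hCempty
    -- pigeonhole: some index class has at least k petals
    have hmapsidx : ∀ G ∈ 𝒢, idx G ∈ Finset.range (m + 1) := by
      intro G hG
      obtain ⟨F, hF, i, hi, rfl⟩ := hform G hG
      rw [hidx_eq F i (hne F hF)]
      exact Finset.mem_range.mpr hi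
    have hpigeon : ∃ i ∈ Finset.range (m + 1),
        k ≤ (𝒢.filter fun G => idx G = i).card := by
      by_contra h
      push_neg at h
      have hsum : 𝒢.card ≤ ∑ i ∈ Finset.range (m + 1), (𝒢.filter fun G => idx G = i).card := by
        rw [← Finset.card_biUnion]
        · apply Finset.card_le_card
          intro G hG
          rw [Finset.mem_biUnion]
          exact ⟨idx G, hmapsidx G hG, Finset.mem_filter.mpr ⟨hG, rfl⟩⟩
        · intro i _ j _ hij
          simp only [Finset.disjoint_left, Finset.mem_filter]
          rintro G ⟨-, h1⟩ ⟨-, h2⟩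
          exact hij (h1.symm.trans h2)
      have hlt : ∑ i ∈ Finset.range (m + 1), (𝒢.filter fun G => idx G = i).card ≤
          (k - 1) * (m + 1) := by
        calc ∑ i ∈ Finset.range (m + 1), (𝒢.filter fun G => idx G = i).card
            ≤ ∑ _i ∈ Finset.range (m + 1), (k - 1) :=
              Finset.sum_le_sum fun i hi => by
                have := h i hi; omega
          _ = (m + 1) * (k - 1) := by rw [Finset.sum_const, Finset.card_range]; simp [mul_comm]
          _ = (k - 1) * (m + 1) := mul_comm _ _
      rw [hcard] at hsum
      have : k * (m + 1) ≤ (k - 1) * (m + 1) := le_trans hsum hlt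
      have hk1 : k - 1 < k := by omega
      have := Nat.mul_le_mul_right (m + 1) (le_of_lt hk1)
      nlinarith [Nat.sub_lt (by omega : 0 < k) one_pos]
    obtain ⟨i, _, hkle⟩ := hpigeon
    obtain ⟨𝒢', h𝒢'sub, h𝒢'card⟩ := Finset.exists_subset_card_eq hkle
    refine ⟨𝒢'.image (fun G => G.image Prod.fst), ?_, ?_, ?_⟩
    · intro A hA
      simp only [Finset.mem_image] at hA
      obtain ⟨G, hG, rfl⟩ := hA
      have hG𝒢 : G ∈ 𝒢 := (Finset.filter_subset _ _) (h𝒢'sub hG)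
      obtain ⟨F, hF, j, hj, rfl⟩ := hform G hG𝒢
      have h1 : (F ×ˢ ({j} : Finset ℕ)).image Prod.fst = F := by
        ext x
        simp [mem_prod_singleton, Finset.mem_image]
      rw [h1]; exact hF
    · rw [Finset.card_image_of_injOn, h𝒢'card]
      intro G hG H hH heq
      have hG𝒢 : G ∈ 𝒢 := (Finset.filter_subset _ _) (h𝒢'sub hG)
      have hH𝒢 : H ∈ 𝒢 := (Finset.filter_subset _ _) (h𝒢'sub hH)
      have hGi : idx G = i := (Finset.mem_filter.mp (h𝒢'sub hG)).2
      have hHi : idx H = i := (Finset.mem_filter.mp (h𝒢'sub hH)).2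
      obtain ⟨F, hF, j, hj, rfl⟩ := hform G hG𝒢
      obtain ⟨F', hF', j', hj', rfl⟩ := hform H hH𝒢
      rw [hidx_eq F j (hne F hF)] at hGi
      rw [hidx_eq F' j' (hne F' hF')] at hHi
      have h1 : (F ×ˢ ({j} : Finset ℕ)).image Prod.fst = F := by
        ext x; simp [mem_prod_singleton, Finset.mem_image]
      have h2 : (F' ×ˢ ({j'} : Finset ℕ)).image Prod.fst = F' := by
        ext x; simp [mem_prod_singleton, Finset.mem_image]
      have heq2 : (F ×ˢ ({j} : Finset ℕ)).image Prod.fst =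
          (F' ×ˢ ({j'} : Finset ℕ)).image Prod.fst := heq
      rw [h1, h2] at heq2
      rw [heq2, hGi, hHi]
    · intro A hA B hB hAB
      simp only [Finset.mem_image] at hA hB
      obtain ⟨G, hG, rfl⟩ := hA
      obtain ⟨H, hH, rfl⟩ := hB
      have hG𝒢 : G ∈ 𝒢 := (Finset.filter_subset _ _) (h𝒢'sub hG)
      have hH𝒢 : H ∈ 𝒢 := (Finset.filter_subset _ _) (h𝒢'sub hH)
      have hGH : G ≠ H := fun h => hAB (by rw [h])
      have hint := hcore G hG𝒢 H hH𝒢 hGH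
      rw [Finset.disjoint_left]
      intro x hxG hxH
      simp only [Finset.mem_image] at hxG hxH
      obtain ⟨⟨a, ja⟩, haG, rfl⟩ := hxG
      obtain ⟨⟨b, jb⟩, hbH, hba⟩ := hxH
      have hGi : idx G = i := (Finset.mem_filter.mp (h𝒢'sub hG)).2
      have hHi : idx H = i := (Finset.mem_filter.mp (h𝒢'sub hH)).2
      obtain ⟨F, hF, j, hj, rfl⟩ := hform G hG𝒢
      obtain ⟨F', hF', j', hj', rfl⟩ := hform H hH𝒢
      rw [hidx_eq F j (hne F hF)] at hGi
      rw [hidx_eq F' j' (hne F' hF')] at hHi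
      have h1 := mem_prod_singleton.mp haG
      have h2 := mem_prod_singleton.mp hbH
      simp only at h1 h2
      have : (a, ja) ∈ (F ×ˢ ({j} : Finset ℕ)) ∩ (F' ×ˢ ({j'} : Finset ℕ)) := by
        rw [Finset.mem_inter]
        refine ⟨haG, ?_⟩
        rw [mem_prod_singleton]
        constructor
        · simp only at hba ⊢
          exact hba ▸ h2.1
        · simp only
          rw [h1.2, hGi, ← hHi]
      rw [hint] at this
      simp at this
end

section
/- Let ℱ be a finite family of m non-empty finite subsets of a set U and let k ∈ ℕ. Define ℱ' = {F × {i} : F ∈ ℱ, 0 ≤ i ≤ m}, a family of subsets of U × {0,…,m}. Then ℱ has no hitting set of size at most k if and only if ℱ' contains a (k+1)(m+1)-flower, i.e., there exists a set C and a subfamily 𝒢 ⊆ ℱ' that is a (k+1)(m+1)-flower with core C. -/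
open Finset

theorem IsFlower.le_card {α : Type*} [DecidableEq α] {l : ℕ} {C : Finset α}
    {𝒢 : Finset (Finset α)} (h : IsFlower l C 𝒢) : l ≤ #𝒢 := by
  have hpetal : ∀ G ∈ 𝒢, (G \ C).Nonempty := fun G hG =>
    sdiff_nonempty.mpr (h.1 G hG).not_subset
  choose x hx using hpetal
  calc l ≤ #(𝒢.attach.image fun G => x G.1 G.2) := h.2 _ fun G hG =>
        ⟨x G hG, mem_inter.mpr ⟨hx G hG, mem_image_of_mem _ (mem_attach _ ⟨G, hG⟩)⟩⟩
    _ ≤ #𝒢 := card_image_le.trans_eq card_attach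

section Copies

variable {α : Type*} [DecidableEq α]

def copies (ℱ : Finset (Finset α)) (n : ℕ) : Finset (Finset (α × ℕ)) :=
  (ℱ ×ˢ range n).image fun p => p.1 ×ˢ {p.2}

theorem mem_copies {ℱ : Finset (Finset α)} {n : ℕ} {G : Finset (α × ℕ)} :
    G ∈ copies ℱ n ↔ ∃ F ∈ ℱ, ∃ i < n, F ×ˢ {i} = G := by
  simp [copies, and_assoc]

theorem hits_fst_of_hits_copy {ℱ : Finset (Finset α)} {X : Finset (α × ℕ)} {i : ℕ}
    (hX : ∀ F ∈ ℱ, (F ×ˢ {i} ∩ X).Nonempty) :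
    ∀ F ∈ ℱ, ({p ∈ X | p.2 = i}.image Prod.fst ∩ F).Nonempty := by
  intro F hF
  obtain ⟨⟨a, j⟩, hp⟩ := hX F hF
  simp only [mem_inter, mem_product, mem_singleton] at hp
  obtain ⟨⟨ha, rfl⟩, hpX⟩ := hp
  exact ⟨a, mem_inter.mpr ⟨mem_image.mpr ⟨(a, j), mem_filter.mpr ⟨hpX, rfl⟩, rfl⟩, ha⟩⟩

theorem mul_le_card_of_hits_copies {ℱ : Finset (Finset α)} {k n : ℕ}
    (hℱ : ¬ ∃ S : Finset α, #S ≤ k ∧ ∀ F ∈ ℱ, (S ∩ F).Nonempty)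
    {X : Finset (α × ℕ)} (hX : ∀ G ∈ copies ℱ n, (G ∩ X).Nonempty) : (k + 1) * n ≤ #X := by
  have hlevel : ∀ i ∈ range n, k + 1 ≤ #{p ∈ X | p.2 = i} := by
    intro i hi
    by_contra! hlt
    refine hℱ ⟨_, card_image_le.trans (Nat.lt_succ_iff.mp hlt), hits_fst_of_hits_copy ?_⟩
    exact fun F hF => hX _ (mem_copies.mpr ⟨F, hF, i, mem_range.mp hi, rfl⟩)
  calc (k + 1) * n = ∑ _i ∈ range n, (k + 1) := by simp [mul_comm]
    _ ≤ ∑ i ∈ range n, #{p ∈ X | p.2 = i} := sum_le_sum hlevel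
    _ = #{p ∈ X | p.2 ∈ range n} := sum_card_fiberwise_eq_card_filter _ _ _
    _ ≤ #X := card_filter_le _ _

theorem isFlower_copies {ℱ : Finset (Finset α)} (hne : ∀ F ∈ ℱ, F.Nonempty) {k : ℕ}
    (hℱ : ¬ ∃ S : Finset α, #S ≤ k ∧ ∀ F ∈ ℱ, (S ∩ F).Nonempty) (n : ℕ) :
    IsFlower ((k + 1) * n) ∅ (copies ℱ n) := by
  refine ⟨fun G hG => ?_, fun X hX => mul_le_card_of_hits_copies hℱ fun G hG => ?_⟩
  · obtain ⟨F, hF, i, -, rfl⟩ := mem_copies.mp hG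
    exact empty_ssubset.mpr ((hne F hF).product (singleton_nonempty i))
  · simpa using hX G hG

theorem card_le_of_subset_copies_of_nonempty_core {ℱ : Finset (Finset α)} {n : ℕ}
    {C : Finset (α × ℕ)} {𝒢 : Finset (Finset (α × ℕ))} (h𝒢 : 𝒢 ⊆ copies ℱ n)
    (hC : C.Nonempty) (hcore : ∀ G ∈ 𝒢, C ⊆ G) : #𝒢 ≤ #ℱ := by
  obtain ⟨⟨a, i⟩, ha⟩ := hC
  have hcopy : 𝒢 ⊆ ℱ.image (· ×ˢ {i}) := by
    intro G hG
    obtain ⟨F, hF, j, -, rfl⟩ := mem_copies.mp (h𝒢 hG)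
    have hj : j = i := by simpa [eq_comm] using (mem_product.mp (hcore _ hG ha)).2
    exact mem_image.mpr ⟨F, hF, by rw [hj]⟩
  exact (card_le_card hcopy).trans card_image_le

theorem product_range_hits_copies {ℱ : Finset (Finset α)} {S : Finset α}
    (hS : ∀ F ∈ ℱ, (S ∩ F).Nonempty) (n : ℕ) :
    ∀ G ∈ copies ℱ n, (G ∩ S ×ˢ range n).Nonempty := by
  intro G hG
  obtain ⟨F, hF, i, hi, rfl⟩ := mem_copies.mp hG
  obtain ⟨a, ha⟩ := hS F hF
  rw [mem_inter] at ha
  exact ⟨(a, i), by simp [ha.1, ha.2, hi]⟩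

end Copies

/-- **Correctness of the coNP-hardness reduction for finding flowers.** Let `ℱ` be a
finite family of `m` non-empty finite subsets of `U` and `k ∈ ℕ`. Let
`ℱ' = {F × {i} : F ∈ ℱ, 0 ≤ i ≤ m}`. Then `ℱ` has no hitting set of size at most `k`
iff `ℱ'` contains a `(k+1)(m+1)`-flower. -/
theorem no_small_hittingSet_iff_flower_in_copies {α : Type*} [DecidableEq α]
    (ℱ : Finset (Finset α)) (hne : ∀ F ∈ ℱ, F.Nonempty) (k : ℕ) :
    (¬ ∃ S : Finset α, S.card ≤ k ∧ ∀ F ∈ ℱ, (S ∩ F).Nonempty) ↔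
    (∃ (C : Finset (α × ℕ)) (𝒢 : Finset (Finset (α × ℕ))),
      𝒢 ⊆ ((ℱ ×ˢ Finset.range (ℱ.card + 1)).image fun p => p.1 ×ˢ ({p.2} : Finset ℕ)) ∧
      IsFlower ((k + 1) * (ℱ.card + 1)) C 𝒢) := by
  refine ⟨fun hℱ => ⟨∅, copies ℱ (#ℱ + 1), subset_rfl, isFlower_copies hne hℱ _⟩, ?_⟩
  rintro ⟨C, 𝒢, h𝒢, hflower⟩ ⟨S, hS, hhit⟩
  rcases C.eq_empty_or_nonempty with rfl | hC
  · have hblock := hflower.2 (S ×ˢ range (#ℱ + 1)) fun G hG => by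
      simpa using product_range_hits_copies hhit _ G (h𝒢 hG)
    rw [card_product, card_range] at hblock
    have := Nat.le_of_mul_le_mul_right hblock (Nat.succ_pos _)
    omega
  · have hsmall := card_le_of_subset_copies_of_nonempty_core h𝒢 hC fun G hG =>
      (hflower.1 G hG).subset
    have := hflower.le_card
    nlinarith
end

section
/- Let d ≥ 1 and l ≥ 1 be integers and let ℱ be a finite family of finite sets, each of cardinality exactly d, with |ℱ| > (l−1)^d. If every element x is contained in at most (l−1)^{d−1} members of ℱ, then every blocking set for ℱ has at least l elements (i.e., ℱ is an l-flower with core ∅). -/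
/-- **Key counting step in the flower lemma.** If `ℱ` is a finite family of finite sets,
each of cardinality exactly `d`, with `|ℱ| > (l-1)^d`, and every element lies in at most
`(l-1)^(d-1)` members of `ℱ`, then every blocking set for `ℱ` has at least `l` elements
(i.e. `ℱ` is an `l`-flower with core `∅`). -/
theorem lowDegree_family_needs_large_blockingSet {α : Type*} [DecidableEq α]
    (d l : ℕ) (hd : 1 ≤ d) (hl : 1 ≤ l)
    (ℱ : Finset (Finset α)) (hcard : ∀ F ∈ ℱ, F.card = d)
    (hsize : (l - 1) ^ d < ℱ.card)
    (hdeg : ∀ x : α, (ℱ.filter fun F => x ∈ F).card ≤ (l - 1) ^ (d - 1)) :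
    ∀ X : Finset α, (∀ F ∈ ℱ, (X ∩ F).Nonempty) → l ≤ X.card := by
  intro X hX
  by_contra h
  push_neg at h
  have hXc : X.card ≤ l - 1 := by omega
  have hsub : ℱ ⊆ X.biUnion (fun x => ℱ.filter fun F => x ∈ F) := by
    intro F hF
    obtain ⟨x, hx⟩ := hX F hF
    simp only [Finset.mem_inter] at hx
    exact Finset.mem_biUnion.2 ⟨x, hx.1, Finset.mem_filter.2 ⟨hF, hx.2⟩⟩
  have := Finset.card_le_card hsub
  have h2 : (X.biUnion (fun x => ℱ.filter fun F => x ∈ F)).card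
      ≤ X.card * (l - 1) ^ (d - 1) := by
    calc _ ≤ ∑ x ∈ X, (ℱ.filter fun F => x ∈ F).card := Finset.card_biUnion_le
    _ ≤ ∑ _x ∈ X, (l - 1) ^ (d - 1) := Finset.sum_le_sum fun x _ => hdeg x
    _ = X.card * (l - 1) ^ (d - 1) := by simp [Finset.sum_const, mul_comm]
  have h3 : ℱ.card ≤ (l - 1) ^ d := by
    calc ℱ.card ≤ X.card * (l - 1) ^ (d - 1) := this.trans h2
    _ ≤ (l - 1) * (l - 1) ^ (d - 1) := Nat.mul_le_mul_right _ hXc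
    _ = (l - 1) ^ d := by
        rw [← pow_succ']
        congr 1
        omega
  omega
end

section
/- Let G = (V, E) be a finite simple graph and k ∈ ℕ. Let E'' ⊆ E be a set of edges such that for every S ⊆ V with |S| ≤ 2k, S is a vertex cover of (V, E) if and only if S is a vertex cover of (V, E''). Let V' be the set of endpoints of edges in E'' and let E' = {e ∈ E : both endpoints of e lie in V'}. Then G has an edge dominating set of size at most k if and only if the graph G' = (V', E') has an edge dominating set of size at most k. -/
/-! Shrinking to `(V', E')` can only help: an edge of a dominating set that leaves `V'` meets
`V'` in at most one vertex, and it can be traded for an edge of `E''` through that vertex.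
Conversely, a dominating set `S` of `E'` with `|S| ≤ k` has at most `2k` endpoints, which cover
`E'' ⊆ E'`; by hypothesis they then cover `E`, which says exactly that `S` dominates `E`. -/

section EdgeDomination

variable {V : Type*}

def IsVertexCover (E : Finset (Sym2 V)) (T : Finset V) : Prop :=
  ∀ e ∈ E, ∃ v ∈ T, v ∈ e

def IsEdgeDominatingSet (E S : Finset (Sym2 V)) : Prop :=
  ∀ e ∈ E, e ∉ S → ∃ f ∈ S, ∃ v, v ∈ e ∧ v ∈ f

theorem IsVertexCover.mono {E F : Finset (Sym2 V)} {T : Finset V} (h : IsVertexCover E T)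
    (hFE : F ⊆ E) : IsVertexCover F T :=
  fun e he => h e (hFE he)

section Endpoints

variable [DecidableEq V]

def endpoints (S : Finset (Sym2 V)) : Finset V :=
  S.biUnion Sym2.toFinset

theorem mem_endpoints {S : Finset (Sym2 V)} {v : V} : v ∈ endpoints S ↔ ∃ f ∈ S, v ∈ f := by
  simp only [endpoints, Finset.mem_biUnion, Sym2.mem_toFinset]

theorem card_endpoints_le (S : Finset (Sym2 V)) : (endpoints S).card ≤ 2 * S.card := by
  rw [mul_comm]
  refine Finset.card_biUnion_le_card_mul S _ 2 fun e _ => ?_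
  rw [Sym2.card_toFinset]
  split_ifs <;> omega

theorem isEdgeDominatingSet_iff_isVertexCover_endpoints {E S : Finset (Sym2 V)} :
    IsEdgeDominatingSet E S ↔ IsVertexCover E (endpoints S) := by
  constructor
  · intro hS e he
    by_cases heS : e ∈ S
    · exact ⟨e.out.1, mem_endpoints.2 ⟨e, heS, e.out_fst_mem⟩, e.out_fst_mem⟩
    · obtain ⟨f, hf, v, hve, hvf⟩ := hS e he heS
      exact ⟨v, mem_endpoints.2 ⟨f, hf, hvf⟩, hve⟩
  · intro hT e he _
    obtain ⟨v, hvT, hve⟩ := hT e he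
    obtain ⟨f, hf, hvf⟩ := mem_endpoints.1 hvT
    exact ⟨f, hf, v, hve, hvf⟩

end Endpoints

theorem Sym2.eq_of_mem_of_not_forall_mem {W : Set V} {f : Sym2 V} (hf : ¬ ∀ u ∈ f, u ∈ W)
    {v w : V} (hv : v ∈ f) (hw : w ∈ f) (hvW : v ∈ W) (hwW : w ∈ W) : v = w := by
  by_contra hne
  obtain rfl := (Sym2.mem_and_mem_iff hne).1 ⟨hv, hw⟩
  exact hf fun u hu => (Sym2.mem_iff.1 hu).elim (· ▸ hvW) (· ▸ hwW)

section Induced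

variable {E E' : Finset (Sym2 V)} {W : Set V}

theorem exists_induced_edge_through_mem (hE' : ∀ e, e ∈ E' ↔ e ∈ E ∧ ∀ v ∈ e, v ∈ W)
    (hW : ∀ v ∈ W, ∃ e ∈ E', v ∈ e) {f : Sym2 V} (hf : f ∈ E) :
    ∃ g, (f ∈ E' → g = f) ∧ ∀ v ∈ f, v ∈ W → g ∈ E' ∧ v ∈ g := by
  by_cases hfE' : f ∈ E'
  · exact ⟨f, fun _ => rfl, fun v hv _ => ⟨hfE', hv⟩⟩
  have hf_out : ¬ ∀ u ∈ f, u ∈ W := fun h => hfE' ((hE' f).2 ⟨hf, h⟩)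
  by_cases hmeet : ∃ v ∈ f, v ∈ W
  · obtain ⟨v, hvf, hvW⟩ := hmeet
    obtain ⟨g, hg, hvg⟩ := hW v hvW
    refine ⟨g, fun h => absurd h hfE', fun w hwf hwW => ⟨hg, ?_⟩⟩
    rwa [Sym2.eq_of_mem_of_not_forall_mem hf_out hwf hvf hwW hvW]
  · exact ⟨f, fun _ => rfl, fun v hv hvW => absurd ⟨v, hv, hvW⟩ hmeet⟩

theorem IsEdgeDominatingSet.exists_induced [DecidableEq V]
    (hE' : ∀ e, e ∈ E' ↔ e ∈ E ∧ ∀ v ∈ e, v ∈ W) (hW : ∀ v ∈ W, ∃ e ∈ E', v ∈ e)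
    {S : Finset (Sym2 V)} (hSE : S ⊆ E) (hS : IsEdgeDominatingSet E S) :
    ∃ S' ⊆ E', S'.card ≤ S.card ∧ IsEdgeDominatingSet E' S' := by
  choose! r hr using fun f (hf : f ∈ S) => exists_induced_edge_through_mem hE' hW (hSE hf)
  refine ⟨(S.image r).filter (· ∈ E'), fun _ h => (Finset.mem_filter.1 h).2,
    (Finset.card_filter_le _ _).trans Finset.card_image_le, fun e he heS' => ?_⟩
  have mem_S' : ∀ f ∈ S, r f ∈ E' → r f ∈ (S.image r).filter (· ∈ E') :=
    fun f hf h => Finset.mem_filter.2 ⟨Finset.mem_image_of_mem r hf, h⟩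
  by_cases heS : e ∈ S
  · have hre : r e = e := (hr e heS).1 he
    have he_mem := mem_S' e heS
    rw [hre] at he_mem
    exact absurd (he_mem he) heS'
  obtain ⟨f, hf, v, hve, hvf⟩ := hS e ((hE' e).1 he).1 heS
  obtain ⟨hrf, hvrf⟩ := (hr f hf).2 v hvf (((hE' e).1 he).2 v hve)
  exact ⟨r f, mem_S' f hf hrf, v, hve, hvrf⟩

end Induced

end EdgeDomination

theorem edgeDominatingSet_kernel_correct_general {V : Type*} [DecidableEq V]
    (E : Finset (Sym2 V)) (k : ℕ)
    (E'' : Finset (Sym2 V)) (hsub : E'' ⊆ E)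
    (hvc : ∀ S : Finset V, S.card ≤ 2 * k →
      ((∀ e ∈ E, ∃ v ∈ S, v ∈ e) ↔ (∀ e ∈ E'', ∃ v ∈ S, v ∈ e)))
    (V' : Finset V) (hV' : ∀ v, v ∈ V' ↔ ∃ e ∈ E'', v ∈ e)
    (E' : Finset (Sym2 V)) (hE' : ∀ e, e ∈ E' ↔ e ∈ E ∧ ∀ v ∈ e, v ∈ V') :
    (∃ S ⊆ E, S.card ≤ k ∧ ∀ e ∈ E, e ∉ S → ∃ f ∈ S, ∃ v, v ∈ e ∧ v ∈ f) ↔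
    (∃ S ⊆ E', S.card ≤ k ∧ ∀ e ∈ E', e ∉ S → ∃ f ∈ S, ∃ v, v ∈ e ∧ v ∈ f) := by
  have hE''E' : E'' ⊆ E' := fun g hg => (hE' g).2 ⟨hsub hg, fun v hv => (hV' v).2 ⟨g, hg, hv⟩⟩
  constructor
  · rintro ⟨S, hSE, hcard, hS⟩
    have hW : ∀ v ∈ (V' : Set V), ∃ e ∈ E', v ∈ e := fun v hv =>
      let ⟨g, hg, hvg⟩ := (hV' v).1 hv; ⟨g, hE''E' hg, hvg⟩
    obtain ⟨S', hS'E', hcard', hS'⟩ := IsEdgeDominatingSet.exists_induced hE' hW hSE hS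
    exact ⟨S', hS'E', hcard'.trans hcard, hS'⟩
  · rintro ⟨S, hSE', hcard, hS⟩
    have hcoverE'' : IsVertexCover E'' (endpoints S) :=
      (isEdgeDominatingSet_iff_isVertexCover_endpoints.1 hS).mono hE''E'
    have hcardT : (endpoints S).card ≤ 2 * k := (card_endpoints_le S).trans (by omega)
    exact ⟨S, hSE'.trans fun e he => ((hE' e).1 he).1, hcard,
      isEdgeDominatingSet_iff_isVertexCover_endpoints.2 ((hvc _ hcardT).2 hcoverE'')⟩

/-- **Correctness of the Edge Dominating Set kernelization (Lemma 10).** Let `(V, E)` be a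
finite simple graph and `E'' ⊆ E` such that every vertex set of size at most `2k` is a
vertex cover of `(V, E)` iff it is a vertex cover of `(V, E'')`. Let `V'` be the set of
endpoints of edges of `E''` and `E'` the set of edges of `E` with both endpoints in `V'`.
Then `(V, E)` has an edge dominating set of size at most `k` iff `(V', E')` does. -/
theorem edgeDominatingSet_kernel_correct {V : Type*} [DecidableEq V]
    (E : Finset (Sym2 V)) (hsimple : ∀ e ∈ E, ¬ e.IsDiag) (k : ℕ)
    (E'' : Finset (Sym2 V)) (hsub : E'' ⊆ E)
    (hvc : ∀ S : Finset V, S.card ≤ 2 * k →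
      ((∀ e ∈ E, ∃ v ∈ S, v ∈ e) ↔ (∀ e ∈ E'', ∃ v ∈ S, v ∈ e)))
    (V' : Finset V) (hV' : ∀ v, v ∈ V' ↔ ∃ e ∈ E'', v ∈ e)
    (E' : Finset (Sym2 V)) (hE' : ∀ e, e ∈ E' ↔ e ∈ E ∧ ∀ v ∈ e, v ∈ V') :
    (∃ S ⊆ E, S.card ≤ k ∧ ∀ e ∈ E, e ∉ S → ∃ f ∈ S, ∃ v, v ∈ e ∧ v ∈ f) ↔
    (∃ S ⊆ E', S.card ≤ k ∧ ∀ e ∈ E', e ∉ S → ∃ f ∈ S, ∃ v, v ∈ e ∧ v ∈ f) :=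
  edgeDominatingSet_kernel_correct_general E k E'' hsub hvc V' hV' E' hE'
end
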